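/- arXiv:1204.2752 — 5 statements merged into one kernel-verified Lean document; each statement's English description precedes it below -/
import Mathlib

section
/- Let A and B be finite-dimensional C*-algebras, J ⊆ A a positively generated subspace, and Φ : A → B a completely positive map with Choi matrix X_Φ ∈ B ⊗ A. Then Φ preserves trace on J (i.e., Tr Φ(a) = Tr a for all a ∈ J) if and only if Tr_B(X_Φ) ∈ I_A + (J^T)^⊥, where (J^T)^⊥ is the orthogonal complement of the transpose of J with respect to the Hilbert–Schmidt inner product. -/
open Matrix ComplexOrder

variable {n m : Type*} [Fintype n] [DecidableEq n] [Fintype m] [DecidableEq m]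

/-- Partial trace over the first tensor factor `B` of `B ⊗ A`,
realized on matrices indexed by products. -/
noncomputable def ptrace (X : Matrix (m × n) (m × n) ℂ) : Matrix n n ℂ :=
  Matrix.of fun a b => ∑ i, X (i, a) (i, b)

/-- The Choi matrix of a linear map `Φ : A → B` (on full matrix algebras). -/
noncomputable def choi (Φ : Matrix n n ℂ →ₗ[ℂ] Matrix m m ℂ) : Matrix (m × n) (m × n) ℂ :=
  Matrix.of fun p q => Φ (Matrix.single p.2 q.2 1) p.1 q.1

/-- Hilbert–Schmidt orthogonal complement of a subspace. -/
noncomputable def hsPerp {k : Type*} [Fintype k] (J : Submodule ℂ (Matrix k k ℂ)) :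
    Submodule ℂ (Matrix k k ℂ) where
  carrier := {x | ∀ a ∈ J, Matrix.trace (aᴴ * x) = 0}
  add_mem' := by
    intro x y hx hy a ha
    simp [Matrix.mul_add, hx a ha, hy a ha]
  zero_mem' := by intro a ha; simp
  smul_mem' := by
    intro c x hx a ha
    simp [Matrix.mul_smul, hx a ha]

/-- Hilbert–Schmidt orthogonal complement of the transpose `J^T` of a subspace `J`. -/
def hsPerpT {k : Type*} [Fintype k] (J : Submodule ℂ (Matrix k k ℂ)) : Set (Matrix k k ℂ) :=
  {x | ∀ a ∈ J, Matrix.trace (aᵀᴴ * x) = 0}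

/-- A subspace is positively generated if it is spanned by its positive elements. -/
def PositivelyGenerated {k : Type*} [Fintype k] (J : Submodule ℂ (Matrix k k ℂ)) : Prop :=
  J = Submodule.span ℂ {a : Matrix k k ℂ | a ∈ J ∧ a.PosSemidef}

/-- `P` is the support projection of `X`: a Hermitian idempotent with the same range. -/
def IsSupportProj {k : Type*} [Fintype k] [DecidableEq k] (X P : Matrix k k ℂ) : Prop :=
  P.IsHermitian ∧ P * P = P ∧
    LinearMap.range (Matrix.toLin' P) = LinearMap.range (Matrix.toLin' X)

/-!
Expanding `a` in matrix units gives `Tr Φ(a) = Tr (aᵀ · Tr_B X_Φ)`, so trace preservation on `J`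
says that `a ↦ Tr (aᵀ (Tr_B X_Φ - 1))` vanishes on `J`. On a positive `a` this agrees with the
Hilbert–Schmidt pairing `⟨aᵀ, Tr_B X_Φ - 1⟩`, because `aᵀ` is Hermitian. Both conditions are
(semi)linear in `a`, so it suffices to compare them on the positive elements spanning `J`.
-/

section ChoiTrace

variable {ι κ : Type*} [Fintype ι] [DecidableEq ι] [Fintype κ]

lemma trace_map_eq_trace_transpose_mul_ptrace_choi (Φ : Matrix ι ι ℂ →ₗ[ℂ] Matrix κ κ ℂ)
    (a : Matrix ι ι ℂ) : trace (Φ a) = trace (aᵀ * ptrace (choi Φ)) := by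
  have h_single : ∀ j k : ι, trace (Φ (single j k 1)) = ptrace (choi Φ) j k := by
    intro j k
    simp [ptrace, choi, trace]
  have h_smul : ∀ j k : ι, single j k (a j k) = a j k • single j k 1 := by
    intro j k
    rw [smul_single, smul_eq_mul, mul_one]
  calc trace (Φ a) = ∑ j, ∑ k, a j k * ptrace (choi Φ) j k := by
        conv_lhs => rw [matrix_eq_sum_single a]
        simp only [h_smul, map_sum, map_smul, trace_sum, trace_smul, smul_eq_mul,
          h_single]
    _ = trace (aᵀ * ptrace (choi Φ)) := by
        simp only [trace, diag_apply, mul_apply, transpose_apply]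
        rw [Finset.sum_comm]

lemma trace_map_sub_trace_eq_trace_transpose_conjTranspose_mul
    (Φ : Matrix ι ι ℂ →ₗ[ℂ] Matrix κ κ ℂ) {a : Matrix ι ι ℂ} (ha : a.IsHermitian) :
    trace (Φ a) - trace a = trace (aᵀᴴ * (ptrace (choi Φ) - 1)) := by
  rw [ha.transpose.eq, Matrix.mul_sub, Matrix.mul_one, trace_sub, trace_transpose,
    trace_map_eq_trace_transpose_mul_ptrace_choi]

end ChoiTrace

noncomputable def hsPairingTranspose {k : Type*} [Fintype k] (X : Matrix k k ℂ) :
    Matrix k k ℂ →ₗ⋆[ℂ] ℂ where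
  toFun a := trace (aᵀᴴ * X)
  map_add' a b := by simp [Matrix.add_mul]
  map_smul' c a := by simp [Matrix.smul_mul]

lemma PositivelyGenerated.forall_eq_zero_iff {k : Type*} [Fintype k] {σ : ℂ →+* ℂ}
    {J : Submodule ℂ (Matrix k k ℂ)} (hJ : PositivelyGenerated J) (f : Matrix k k ℂ →ₛₗ[σ] ℂ) :
    (∀ a ∈ J, f a = 0) ↔ ∀ a ∈ J, a.PosSemidef → f a = 0 := by
  refine ⟨fun h a ha _ => h a ha, fun h a ha => ?_⟩
  rw [hJ] at ha
  exact (Submodule.span_le (p := LinearMap.ker f)).2 (fun x hx => h x hx.1 hx.2) ha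

theorem trace_preserving_iff_ptrace_choi_general
    (J : Submodule ℂ (Matrix n n ℂ)) (hJ : PositivelyGenerated J)
    (Φ : Matrix n n ℂ →ₗ[ℂ] Matrix m m ℂ) :
    (∀ a ∈ J, Matrix.trace (Φ a) = Matrix.trace a) ↔
      ptrace (choi Φ) - 1 ∈ hsPerpT J := by
  let traceDefect : Matrix n n ℂ →ₗ[ℂ] ℂ := traceLinearMap m ℂ ℂ ∘ₗ Φ - traceLinearMap n ℂ ℂ
  calc (∀ a ∈ J, trace (Φ a) = trace a) ↔ ∀ a ∈ J, traceDefect a = 0 := by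
        simp [traceDefect, sub_eq_zero]
    _ ↔ ∀ a ∈ J, a.PosSemidef → traceDefect a = 0 := hJ.forall_eq_zero_iff traceDefect
    _ ↔ ∀ a ∈ J, a.PosSemidef → hsPairingTranspose (ptrace (choi Φ) - 1) a = 0 := by
        refine forall₂_congr fun a _ => forall_congr' fun ha => ?_
        simp [traceDefect, hsPairingTranspose,
          ← trace_map_sub_trace_eq_trace_transpose_conjTranspose_mul Φ ha.isHermitian]
    _ ↔ ptrace (choi Φ) - 1 ∈ hsPerpT J := (hJ.forall_eq_zero_iff _).symm

/-- a completely positive map `Φ : A → B` preserves trace on a positively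
generated subspace `J ⊆ A` iff `Tr_B(X_Φ) ∈ I_A + (J^T)^⊥`. -/
theorem trace_preserving_iff_ptrace_choi
    (J : Submodule ℂ (Matrix n n ℂ)) (hJ : PositivelyGenerated J)
    (Φ : Matrix n n ℂ →ₗ[ℂ] Matrix m m ℂ) (hCP : (choi Φ).PosSemidef) :
    (∀ a ∈ J, Matrix.trace (Φ a) = Matrix.trace a) ↔
      ptrace (choi Φ) - 1 ∈ hsPerpT J :=
  trace_preserving_iff_ptrace_choi_general J hJ Φ
end

section
/- Let X ∈ C_J(A,B) with support projection P = supp(X). Then X is an extreme point of C_J(A,B) if and only if (B⊗A)_P ∩ Lin(L) = {0}, where Lin(L) = {Y ∈ B⊗A : Tr_B Y ∈ (J^T)^⊥} and (B⊗A)_P = P(B⊗A)P. -/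
open Matrix ComplexOrder

variable {n m : Type*} [Fintype n] [DecidableEq n] [Fintype m] [DecidableEq m]

/-! `X + (1 - P)` is positive definite, i.e. an interior point of the positive cone, and
compressing by `P` shows that `X ± ε H` stays positive for every Hermitian `H` with `P H P = H`
and small `ε > 0`. Hence a nonzero Hermitian `H ∈ (B⊗A)_P ∩ Lin(L)` writes `X` as the midpoint
of `X ± ε H ∈ C_J(A,B)`; positive generation of `J` makes `(B⊗A)_P ∩ Lin(L)` closed under
adjoints, so Hermitian elements suffice. Conversely, if `X` lies strictly between `Y` and `Z` in
`C_J(A,B)`, then `ker X ⊆ ker Y`, so `Y - X ∈ (B⊗A)_P ∩ Lin(L)`. -/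

open scoped MatrixOrder

lemma eq_zero_of_add_mem_of_sub_mem_of_mem_extremePoints {E : Type*} [AddCommGroup E]
    [Module ℝ E] {s : Set E} {x v : E} (hx : x ∈ s.extremePoints ℝ) (hadd : x + v ∈ s)
    (hsub : x - v ∈ s) : v = 0 := by
  have hmid : x ∈ openSegment ℝ (x + v) (x - v) :=
    ⟨1 / 2, 1 / 2, by norm_num, by norm_num, by norm_num, by module⟩
  simpa using hx.2 hadd hsub hmid

lemma Submodule.eq_zero_of_forall_isSelfAdjoint_eq_zero {A : Type*} [AddCommGroup A]
    [Module ℂ A] [StarAddMonoid A] [StarModule ℂ A] (W : Submodule ℂ A)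
    (hW : ∀ y ∈ W, star y ∈ W) (h : ∀ y ∈ W, IsSelfAdjoint y → y = 0) {y : A} (hy : y ∈ W) :
    y = 0 := by
  have hre : (realPart y : A) ∈ W := by
    rw [realPart_apply_coe]
    exact W.smul_of_tower_mem _ (W.add_mem hy (hW y hy))
  have him : (imaginaryPart y : A) ∈ W := by
    rw [imaginaryPart_apply_coe]
    exact W.smul_mem _ (W.smul_of_tower_mem _ (W.sub_mem hy (hW y hy)))
  rw [← realPart_add_I_smul_imaginaryPart y, h _ hre (realPart y).2,
    h _ him (imaginaryPart y).2, smul_zero, add_zero]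

lemma IsStrictlyPositive.exists_pos_nonneg_add_smul_and_sub_smul {A : Type*}
    [TopologicalSpace A] [Ring A] [StarRing A] [PartialOrder A] [StarOrderedRing A]
    [Algebra ℝ A] [NonnegSpectrumClass ℝ A] [ContinuousFunctionalCalculus ℝ A IsSelfAdjoint]
    [PosSMulMono ℝ A] {y h : A} (hy : IsStrictlyPositive y) (hh : IsSelfAdjoint h) :
    ∃ ε : ℝ, 0 < ε ∧ 0 ≤ y + ε • h ∧ 0 ≤ y - ε • h := by
  obtain _ | _ := subsingleton_or_nontrivial A
  · exact ⟨1, one_pos, (Subsingleton.elim _ _).le, (Subsingleton.elim _ _).le⟩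
  obtain ⟨r, hr, hry⟩ :=
    (CFC.exists_pos_algebraMap_le_iff hy.isSelfAdjoint).2 fun _ hx ↦ hy.spectrum_pos hx
  obtain ⟨C, hC⟩ := (isCompact_iff_compactSpace.mpr
    (ContinuousFunctionalCalculus.compactSpace_spectrum (R := ℝ) h)).isBounded.exists_norm_le
  have hlow : algebraMap ℝ A (-C) ≤ h :=
    algebraMap_le_of_le_spectrum fun x hx ↦ (abs_le.mp (hC x hx)).1
  have hup : h ≤ algebraMap ℝ A C :=
    le_algebraMap_of_spectrum_le fun x hx ↦ (abs_le.mp (hC x hx)).2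
  set ε := r / (|C| + 1)
  have hε : 0 < ε := by positivity
  have hεC : ε * C ≤ r := by
    calc ε * C ≤ ε * (|C| + 1) := by gcongr; linarith [le_abs_self C]
      _ = r := div_mul_cancel₀ r (by positivity)
  have key : ∀ g : A, algebraMap ℝ A (-C) ≤ g → 0 ≤ y + ε • g := fun g hg ↦
    calc 0 ≤ algebraMap ℝ A (r - ε * C) := algebraMap_nonneg A (sub_nonneg.mpr hεC)
      _ = algebraMap ℝ A r + ε • algebraMap ℝ A (-C) := by
        simp only [Algebra.algebraMap_eq_smul_one, smul_smul]
        module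
      _ ≤ y + ε • g := add_le_add hry (smul_le_smul_of_nonneg_left hg hε.le)
  refine ⟨ε, hε, key h hlow, ?_⟩
  rw [sub_eq_add_neg, ← smul_neg]
  exact key _ (by rw [map_neg]; exact neg_le_neg hup)

lemma Matrix.PosSemidef.mulVec_eq_zero_of_mem_openSegment {k : Type*} [Fintype k]
    {X Y Z : Matrix k k ℂ} (hY : Y.PosSemidef) (hZ : Z.PosSemidef) (hX : X ∈ openSegment ℝ Y Z)
    {v : k → ℂ} (hv : X *ᵥ v = 0) : Y *ᵥ v = 0 := by
  obtain ⟨a, b, ha, hb, -, rfl⟩ := hX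
  have haY := hY.smul ha.le
  have hsum : star v ⬝ᵥ (a • Y) *ᵥ v + star v ⬝ᵥ (b • Z) *ᵥ v = 0 := by
    rw [← dotProduct_add, ← add_mulVec, hv, dotProduct_zero]
  have hYv := ((add_eq_zero_iff_of_nonneg (haY.dotProduct_mulVec_nonneg v)
    ((hZ.smul hb.le).dotProduct_mulVec_nonneg v)).mp hsum).1
  rw [haY.dotProduct_mulVec_zero_iff, smul_mulVec, smul_eq_zero] at hYv
  exact hYv.resolve_left ha.ne'

section PartialTrace

variable {ι κ : Type*} [Fintype ι]

noncomputable def ptraceLinearMap : Matrix (ι × κ) (ι × κ) ℂ →ₗ[ℂ] Matrix κ κ ℂ where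
  toFun := ptrace
  map_add' X Y := by ext; simp [ptrace, Finset.sum_add_distrib]
  map_smul' c X := by ext; simp [ptrace, Finset.mul_sum]

lemma ptrace_conjTranspose (X : Matrix (ι × κ) (ι × κ) ℂ) : ptrace Xᴴ = (ptrace X)ᴴ := by
  ext; simp [ptrace]

end PartialTrace

section HilbertSchmidt

variable {k : Type*} [Fintype k] {J : Submodule ℂ (Matrix k k ℂ)}

def hsPerpTSubmodule (J : Submodule ℂ (Matrix k k ℂ)) : Submodule ℂ (Matrix k k ℂ) where
  carrier := hsPerpT J
  add_mem' hx hy a ha := by rw [Matrix.mul_add, trace_add, hx a ha, hy a ha, add_zero]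
  zero_mem' a _ := by rw [Matrix.mul_zero, trace_zero]
  smul_mem' c x hx a ha := by rw [mul_smul_comm, trace_smul, hx a ha, smul_zero]

lemma PositivelyGenerated.conjTranspose_mem (hJ : PositivelyGenerated J) {a : Matrix k k ℂ}
    (ha : a ∈ J) : aᴴ ∈ J := by
  rw [hJ] at ha ⊢
  induction ha using Submodule.span_induction with
  | mem x hx => rw [hx.2.1.eq]; exact Submodule.subset_span hx
  | zero => simp
  | add x y _ _ hx hy => rw [conjTranspose_add]; exact add_mem hx hy
  | smul c x _ hx => rw [conjTranspose_smul]; exact Submodule.smul_mem _ _ hx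

lemma PositivelyGenerated.conjTranspose_mem_hsPerpT (hJ : PositivelyGenerated J)
    {x : Matrix k k ℂ} (hx : x ∈ hsPerpT J) : xᴴ ∈ hsPerpT J := by
  intro a ha
  have h : trace (aᵀ * x) = 0 := by
    have e : aᴴᵀᴴ = aᵀ := by ext; simp
    simpa [e] using hx aᴴ (hJ.conjTranspose_mem ha)
  rw [← conjTranspose_mul, trace_conjTranspose, trace_mul_comm, h, star_zero]

end HilbertSchmidt

section Lin

variable {ι κ : Type*} [Fintype ι] [Fintype κ] {J : Submodule ℂ (Matrix κ κ ℂ)}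

noncomputable def linL (J : Submodule ℂ (Matrix κ κ ℂ)) :
    Submodule ℂ (Matrix (ι × κ) (ι × κ) ℂ) :=
  (hsPerpTSubmodule J).comap ptraceLinearMap

lemma mem_linL {Y : Matrix (ι × κ) (ι × κ) ℂ} : Y ∈ linL J ↔ ptrace Y ∈ hsPerpT J := Iff.rfl

lemma PositivelyGenerated.conjTranspose_mem_linL (hJ : PositivelyGenerated J)
    {Y : Matrix (ι × κ) (ι × κ) ℂ} (hY : Y ∈ linL J) : Yᴴ ∈ linL J := by
  rw [mem_linL, ptrace_conjTranspose]
  exact hJ.conjTranspose_mem_hsPerpT hY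

lemma ptrace_sub_one_mem_hsPerpT_iff [DecidableEq κ] {X Y : Matrix (ι × κ) (ι × κ) ℂ}
    (hX : ptrace X - 1 ∈ hsPerpT J) : ptrace Y - 1 ∈ hsPerpT J ↔ Y - X ∈ linL J := by
  have h : ptrace (Y - X) = (ptrace Y - 1) - (ptrace X - 1) := by
    rw [sub_sub_sub_cancel_right]; exact map_sub ptraceLinearMap Y X
  rw [mem_linL, h]
  exact ((hsPerpTSubmodule J).sub_mem_iff_left hX).symm

end Lin

section Compression

variable {k : Type*} [Fintype k]

def compression (P : Matrix k k ℂ) : Submodule ℂ (Matrix k k ℂ) where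
  carrier := {Y | P * Y * P = Y}
  add_mem' {Y Z} (hY : P * Y * P = Y) (hZ : P * Z * P = Z) := by
    show P * (Y + Z) * P = Y + Z
    rw [Matrix.mul_add, Matrix.add_mul, hY, hZ]
  zero_mem' := by simp
  smul_mem' c Y (hY : P * Y * P = Y) := by
    show P * (c • Y) * P = c • Y
    rw [mul_smul_comm, smul_mul_assoc, hY]

lemma mem_compression {P Y : Matrix k k ℂ} : Y ∈ compression P ↔ P * Y * P = Y := Iff.rfl

lemma conjTranspose_mem_compression {P Y : Matrix k k ℂ} (hP : P.IsHermitian)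
    (hY : Y ∈ compression P) : Yᴴ ∈ compression P := by
  rw [mem_compression] at *
  simpa [Matrix.mul_assoc, hP.eq] using congrArg conjTranspose hY

end Compression

namespace IsSupportProj

variable {k : Type*} [Fintype k] [DecidableEq k] {X P Y H : Matrix k k ℂ}

lemma proj_mul_eq (hP : IsSupportProj X P) : P * X = X := by
  refine Matrix.toLin'.injective (LinearMap.ext fun v => ?_)
  obtain ⟨w, hw⟩ : Matrix.toLin' X v ∈ LinearMap.range (Matrix.toLin' P) :=
    hP.2.2 ▸ LinearMap.mem_range_self _ v
  rw [Matrix.toLin'_mul, LinearMap.comp_apply, ← hw, ← LinearMap.comp_apply,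
    ← Matrix.toLin'_mul, hP.2.1]

lemma mul_proj_eq (hP : IsSupportProj X P) (hX : X.IsHermitian) : X * P = X := by
  simpa [hP.1.eq, hX.eq] using congrArg conjTranspose hP.proj_mul_eq

lemma mulVec_eq_zero (hP : IsSupportProj X P) (hX : X.IsHermitian) {v : k → ℂ}
    (hv : X *ᵥ v = 0) : P *ᵥ v = 0 := by
  obtain ⟨w, hw⟩ : Matrix.toLin' P v ∈ LinearMap.range (Matrix.toLin' X) :=
    hP.2.2 ▸ LinearMap.mem_range_self _ v
  rw [Matrix.toLin'_apply, Matrix.toLin'_apply] at hw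
  rw [← dotProduct_star_self_eq_zero]
  calc star (P *ᵥ v) ⬝ᵥ P *ᵥ v = star v ⬝ᵥ (P * P) *ᵥ v := by
        rw [star_mulVec, hP.1.eq, ← dotProduct_mulVec, mulVec_mulVec]
    _ = star v ⬝ᵥ X *ᵥ w := by rw [hP.2.1, hw]
    _ = star (X *ᵥ v) ⬝ᵥ w := by rw [star_mulVec, hX.eq, dotProduct_mulVec]
    _ = 0 := by rw [hv, star_zero, zero_dotProduct]

lemma mem_compression_of_ker_le (hP : IsSupportProj X P) (hX : X.IsHermitian)
    (hY : Y.IsHermitian) (hker : ∀ v, X *ᵥ v = 0 → Y *ᵥ v = 0) : Y ∈ compression P := by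
  have hYP : Y * P = Y := by
    refine Matrix.toLin'.injective (LinearMap.ext fun v => ?_)
    have h := hker (P *ᵥ v - v) (by rw [mulVec_sub, mulVec_mulVec, hP.mul_proj_eq hX, sub_self])
    rw [mulVec_sub, sub_eq_zero, mulVec_mulVec] at h
    simpa [Matrix.toLin'_apply] using h
  have hPY : P * Y = Y := by simpa [hP.1.eq, hY.eq] using congrArg conjTranspose hYP
  show P * Y * P = Y
  rw [hPY, hYP]

lemma mem_compression_self (hP : IsSupportProj X P) (hX : X.IsHermitian) :
    X ∈ compression P :=
  hP.mem_compression_of_ker_le hX hX fun _ => id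

lemma posDef_add_one_sub (hP : IsSupportProj X P) (hX : X.PosSemidef) :
    (X + (1 - P)).PosDef := by
  have hQ : (1 - P).PosSemidef := by
    have h : (1 - P)ᴴ * (1 - P) = 1 - P := by
      rw [conjTranspose_sub, conjTranspose_one, hP.1.eq, Matrix.sub_mul, Matrix.mul_sub,
        Matrix.mul_sub, Matrix.one_mul, Matrix.one_mul, Matrix.mul_one, hP.2.1, sub_self, sub_zero]
    exact h ▸ posSemidef_conjTranspose_mul_self _
  have hXQ := hX.add hQ
  refine .of_dotProduct_mulVec_pos hXQ.1 fun v hv => lt_of_le_of_ne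
    (hXQ.dotProduct_mulVec_nonneg v) fun h0 => hv ?_
  rw [add_mulVec, dotProduct_add] at h0
  obtain ⟨hXv, hQv⟩ := (add_eq_zero_iff_of_nonneg (hX.dotProduct_mulVec_nonneg v)
    (hQ.dotProduct_mulVec_nonneg v)).mp h0.symm
  rw [hX.dotProduct_mulVec_zero_iff] at hXv
  rw [hQ.dotProduct_mulVec_zero_iff, sub_mulVec, one_mulVec, sub_eq_zero] at hQv
  rw [hQv, hP.mulVec_eq_zero hX.1 hXv]

lemma exists_pos_posSemidef_add_smul_and_sub_smul (hP : IsSupportProj X P)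
    (hX : X.PosSemidef) (hH : H.IsHermitian) (hPH : H ∈ compression P) :
    ∃ ε : ℝ, 0 < ε ∧ (X + ε • H).PosSemidef ∧ (X - ε • H).PosSemidef := by
  obtain ⟨ε, hε, hadd, hsub⟩ := (hP.posDef_add_one_sub hX).isStrictlyPositive
    |>.exists_pos_nonneg_add_smul_and_sub_smul hH
  have hPXP : P * X * P = X := hP.mem_compression_self hX.1
  have hcompress : ∀ S : Matrix k k ℂ, S ∈ compression P →
      P * (X + (1 - P) + S) * Pᴴ = X + S := by
    intro S hS
    rw [hP.1.eq, Matrix.mul_add, Matrix.mul_add, Matrix.add_mul, Matrix.add_mul, hPXP, hS,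
      Matrix.mul_sub, Matrix.mul_one, hP.2.1, sub_self, Matrix.zero_mul, add_zero]
  refine ⟨ε, hε, ?_, ?_⟩
  · rw [← hcompress _ ((compression P).smul_of_tower_mem ε hPH)]
    exact hadd.posSemidef.mul_mul_conjTranspose_same P
  · rw [sub_eq_add_neg, ← hcompress _ ((compression P).neg_mem
      ((compression P).smul_of_tower_mem ε hPH)), ← sub_eq_add_neg]
    exact hsub.posSemidef.mul_mul_conjTranspose_same P

end IsSupportProj

/-- `X ∈ C_J(A,B)` with support projection `P` is an extreme point iff
`(B⊗A)_P ∩ Lin(L) = {0}`, where `Lin(L) = {Y : Tr_B Y ∈ (J^T)^⊥}`. -/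
theorem extreme_iff_compression_trivial
    (J : Submodule ℂ (Matrix n n ℂ)) (hJ : PositivelyGenerated J)
    (X P : Matrix (m × n) (m × n) ℂ)
    (hX : X.PosSemidef ∧ ptrace X - 1 ∈ hsPerpT J)
    (hP : IsSupportProj X P) :
    X ∈ Set.extremePoints ℝ
        {Y : Matrix (m × n) (m × n) ℂ | Y.PosSemidef ∧ ptrace Y - 1 ∈ hsPerpT J} ↔
      ∀ Y : Matrix (m × n) (m × n) ℂ, P * Y * P = Y → ptrace Y ∈ hsPerpT J → Y = 0 := by
  constructor
  · intro hext Y hPY hY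
    refine (compression P ⊓ linL J).eq_zero_of_forall_isSelfAdjoint_eq_zero
      (fun Z hZ => ⟨conjTranspose_mem_compression hP.1 hZ.1, hJ.conjTranspose_mem_linL hZ.2⟩)
      (fun H hH hsa => ?_) (show Y ∈ compression P ⊓ linL J from ⟨hPY, hY⟩)
    obtain ⟨ε, hε, hadd, hsub⟩ := hP.exists_pos_posSemidef_add_smul_and_sub_smul hX.1 hsa hH.1
    have hεH : ε • H ∈ linL J := (linL J).smul_of_tower_mem ε hH.2
    have hεH0 := eq_zero_of_add_mem_of_sub_mem_of_mem_extremePoints hext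
      ⟨hadd, (ptrace_sub_one_mem_hsPerpT_iff hX.2).mpr (by simpa using hεH)⟩
      ⟨hsub, (ptrace_sub_one_mem_hsPerpT_iff hX.2).mpr (by simpa using neg_mem hεH)⟩
    exact (smul_eq_zero.mp hεH0).resolve_left hε.ne'
  · intro htriv
    refine ⟨hX, fun Y hY Z hZ hseg => ?_⟩
    have hYX : Y - X ∈ compression P :=
      sub_mem (hP.mem_compression_of_ker_le hX.1.1 hY.1.1
          fun _ => hY.1.mulVec_eq_zero_of_mem_openSegment hZ.1 hseg)
        (hP.mem_compression_self hX.1.1)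
    exact sub_eq_zero.mp (htriv _ hYX ((ptrace_sub_one_mem_hsPerpT_iff hX.2).mp hY.2))
end

section
/- Let J = S^{-1}(C ρ₀) where S : A → A₀ is a channel whose adjoint S* : A₀ → A is an injective *-homomorphism, and ρ₀ = S(ρ) for some invertible state ρ ∈ A. Then a positive element d ∈ A satisfies d ∈ (I_A + J^⊥) ∩ A^+ if and only if d = S*(b₀²) where b₀ = σ₀^{1/2}(σ₀^{1/2} ρ₀ σ₀^{1/2})^{-1/2} σ₀^{1/2} for some state σ₀ ∈ A₀. -/
open Matrix ComplexOrder

variable {n m : Type*} [Fintype n] [DecidableEq n] [Fintype m] [DecidableEq m]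

open scoped Classical

/-- Positive square root of a positive semidefinite matrix (junk value `0` otherwise). -/
noncomputable def msqrt {k : Type*} [Fintype k] [DecidableEq k] (x : Matrix k k ℂ) :
    Matrix k k ℂ :=
  if h : x.PosSemidef then
    (h.1.eigenvectorUnitary : Matrix k k ℂ) *
      Matrix.diagonal ((↑) ∘ (√·) ∘ h.1.eigenvalues) *
      (star h.1.eigenvectorUnitary : Matrix k k ℂ)
  else 0

/-- `x^{-1/2}`, with the inverse taken on the support of `x` (for Hermitian `x`;
junk value `0` otherwise). -/
noncomputable def invSqrtOnSupp {k : Type*} [Fintype k] [DecidableEq k]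
    (x : Matrix k k ℂ) : Matrix k k ℂ :=
  if h : x.IsHermitian then
    (h.eigenvectorUnitary : Matrix k k ℂ) *
      Matrix.diagonal (fun i => ((Real.sqrt (h.eigenvalues i) : ℂ))⁻¹) *
      (star h.eigenvectorUnitary : Matrix k k ℂ)
  else 0

/-- The expression `b₀ = σ₀^{1/2} (σ₀^{1/2} ρ₀ σ₀^{1/2})^{-1/2} σ₀^{1/2}`. -/
noncomputable def bform {k : Type*} [Fintype k] [DecidableEq k]
    (ρ₀ σ₀ : Matrix k k ℂ) : Matrix k k ℂ :=
  msqrt σ₀ * invSqrtOnSupp (msqrt σ₀ * ρ₀ * msqrt σ₀) * msqrt σ₀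

/-!
By Hilbert–Schmidt duality, `J^⊥ = (S⁻¹(ℂ ρ₀))^⊥ = S*((ℂ ρ₀)^⊥)`, so `d ∈ (1 + J^⊥) ∩ A⁺` iff
`d = S*(e)` with `tr (ρ₀ e) = 1` and `S*(e) ≥ 0`; an injective *-homomorphism commutes with the
functional calculus and therefore reflects positivity, so `e ≥ 0`. The state `ρ₀` is invertible,
since `⟪v, ρ₀ v⟫ = tr (S*(v v*) ρ) > 0`. For invertible `ρ₀`, the positive `e` with
`tr (ρ₀ e) = 1` correspond to the states `σ₀` through `σ₀ = e^{1/2} ρ₀ e^{1/2}`, whose inverse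
is `e = b₀²`: the matrix `b₀` is the unique positive solution of `b ρ₀ b = σ₀`.
-/

section HilbertSchmidt

noncomputable def hilbertSchmidtEquiv (k : Type*) [Fintype k] :
    Matrix k k ℂ ≃ₗ[ℂ] EuclideanSpace ℂ (k × k) :=
  (LinearEquiv.curry ℂ ℂ k k).symm.trans (WithLp.linearEquiv 2 ℂ ((k × k) → ℂ)).symm

variable {k l : Type*} [Fintype k] [Fintype l]

lemma inner_hilbertSchmidtEquiv (x y : Matrix k k ℂ) :
    inner ℂ (hilbertSchmidtEquiv k x) (hilbertSchmidtEquiv k y) = trace (xᴴ * y) := by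
  simp only [hilbertSchmidtEquiv, PiLp.inner_apply, RCLike.inner_apply, trace, mul_apply,
    conjTranspose_apply, diag_apply, Fintype.sum_prod_type]
  rw [Finset.sum_comm]
  refine Finset.sum_congr rfl fun i _ => Finset.sum_congr rfl fun j _ => ?_
  rw [mul_comm]
  rfl

lemma hsPerp_eq_comap_orthogonal (V : Submodule ℂ (Matrix k k ℂ)) :
    hsPerp V = (V.map (hilbertSchmidtEquiv k).toLinearMap)ᗮ.comap
      (hilbertSchmidtEquiv k).toLinearMap := by
  ext x
  simp only [hsPerp, Submodule.mem_mk, AddSubmonoid.mem_mk, AddSubsemigroup.mem_mk,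
    Set.mem_ofPred_eq, Submodule.mem_comap, Submodule.mem_orthogonal, Submodule.mem_map,
    forall_exists_index, and_imp, forall_apply_eq_imp_iff₂, LinearEquiv.coe_coe,
    inner_hilbertSchmidtEquiv]

lemma hsPerp_hsPerp (V : Submodule ℂ (Matrix k k ℂ)) : hsPerp (hsPerp V) = V := by
  rw [hsPerp_eq_comap_orthogonal, hsPerp_eq_comap_orthogonal,
    Submodule.map_comap_eq_of_surjective (hilbertSchmidtEquiv k).surjective,
    Submodule.orthogonal_orthogonal,
    Submodule.comap_map_eq_of_injective (hilbertSchmidtEquiv k).injective]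

lemma hsPerp_map_eq_comap (S : Matrix k k ℂ →ₗ[ℂ] Matrix l l ℂ)
    (T : Matrix l l ℂ →ₗ[ℂ] Matrix k k ℂ) (hadj : ∀ a b, trace ((T b)ᴴ * a) = trace (bᴴ * S a))
    (V : Submodule ℂ (Matrix l l ℂ)) :
    hsPerp (V.map T) = (hsPerp V).comap S := by
  ext x
  simp [hsPerp, hadj]

lemma hsPerp_comap_eq_map (S : Matrix k k ℂ →ₗ[ℂ] Matrix l l ℂ)
    (T : Matrix l l ℂ →ₗ[ℂ] Matrix k k ℂ) (hadj : ∀ a b, trace ((T b)ᴴ * a) = trace (bᴴ * S a))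
    (W : Submodule ℂ (Matrix l l ℂ)) :
    hsPerp (W.comap S) = (hsPerp W).map T := by
  rw [← hsPerp_hsPerp ((hsPerp W).map T), hsPerp_map_eq_comap S T hadj, hsPerp_hsPerp]

lemma mem_hsPerp_span_singleton {x y : Matrix k k ℂ} :
    y ∈ hsPerp (ℂ ∙ x) ↔ trace (xᴴ * y) = 0 := by
  refine ⟨fun h => h x (Submodule.mem_span_singleton_self x), fun h a ha => ?_⟩
  obtain ⟨t, rfl⟩ := Submodule.mem_span_singleton.1 ha
  simp [h]

lemma mem_hsPerp_comap_span_singleton_iff (S : Matrix k k ℂ →ₗ[ℂ] Matrix l l ℂ)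
    (T : Matrix l l ℂ →ₗ[ℂ] Matrix k k ℂ) (hadj : ∀ a b, trace ((T b)ᴴ * a) = trace (bᴴ * S a))
    (x : Matrix l l ℂ) (y : Matrix k k ℂ) :
    y ∈ hsPerp ((ℂ ∙ x).comap S) ↔ ∃ c, trace (xᴴ * c) = 0 ∧ T c = y := by
  simp_rw [hsPerp_comap_eq_map S T hadj, Submodule.mem_map, mem_hsPerp_span_singleton]

end HilbertSchmidt

open scoped MatrixOrder

namespace Matrix

variable {k l : Type*} [Fintype k] [DecidableEq k] [Fintype l] [DecidableEq l]

lemma msqrt_eq_sqrt {σ : Matrix k k ℂ} (hσ : σ.PosSemidef) : msqrt σ = CFC.sqrt σ := by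
  rw [msqrt, dif_pos hσ, CFC.sqrt_eq_real_sqrt σ hσ.nonneg, cfcₙ_eq_cfc, hσ.1.cfc_eq,
    IsHermitian.cfc, Unitary.conjStarAlgAut_apply]
  rfl

lemma invSqrtOnSupp_eq_cfc {x : Matrix k k ℂ} (hx : x.IsHermitian) :
    invSqrtOnSupp x = cfc (fun t : ℝ => (√t)⁻¹) x := by
  rw [invSqrtOnSupp, dif_pos hx, hx.cfc_eq, IsHermitian.cfc, Unitary.conjStarAlgAut_apply]
  simp [Function.comp_def]

lemma PosDef.exists_isUnit_mul_self_eq {ρ : Matrix k k ℂ} (hρ : ρ.PosDef) :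
    ∃ r : Matrix k k ℂ, IsUnit r ∧ r.IsHermitian ∧ r * r = ρ :=
  ⟨CFC.sqrt ρ, (CFC.isUnit_sqrt_iff ρ hρ.posSemidef.nonneg).2 hρ.isUnit,
    (CFC.sqrt_nonneg ρ).posSemidef.isHermitian, CFC.sqrt_mul_sqrt_self ρ hρ.posSemidef.nonneg⟩

lemma PosDef.eq_zero_of_conjTranspose_mul_mul_eq_zero {ρ X : Matrix k k ℂ} (hρ : ρ.PosDef)
    (h : Xᴴ * ρ * X = 0) : X = 0 := by
  obtain ⟨r, hr, hrH, rfl⟩ := hρ.exists_isUnit_mul_self_eq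
  have : (r * X)ᴴ * (r * X) = 0 := by
    rw [conjTranspose_mul, hrH.eq, ← h]
    simp only [Matrix.mul_assoc]
  exact hr.mul_right_eq_zero.1 (conjTranspose_mul_self_eq_zero.1 this)

lemma PosDef.eq_of_mul_mul_self_eq {ρ X Y : Matrix k k ℂ} (hρ : ρ.PosDef) (hX : X.PosSemidef)
    (hY : Y.PosSemidef) (h : X * ρ * X = Y * ρ * Y) : X = Y := by
  obtain ⟨r, hr, hrH, rfl⟩ := hρ.exists_isUnit_mul_self_eq
  have hconj {Z : Matrix k k ℂ} (hZ : Z.PosSemidef) : 0 ≤ r * Z * r := by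
    simpa [hrH.eq] using (hZ.mul_mul_conjTranspose_same r).nonneg
  have hsq : (r * X * r) * (r * X * r) = (r * Y * r) * (r * Y * r) := by
    calc (r * X * r) * (r * X * r) = r * (X * (r * r) * X) * r := by simp only [Matrix.mul_assoc]
      _ = r * (Y * (r * r) * Y) * r := by rw [h]
      _ = (r * Y * r) * (r * Y * r) := by simp only [Matrix.mul_assoc]
  have hrXr : r * X * r = r * Y * r :=
    (CFC.sqrt_unique hsq (hconj hX)).symm.trans (CFC.sqrt_unique rfl (hconj hY))
  exact hr.mul_left_cancel (hr.mul_right_cancel hrXr)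

lemma PosDef.trace_mul_pos {ρ X : Matrix k k ℂ} (hρ : ρ.PosDef) (hX : X.PosSemidef)
    (hX0 : X ≠ 0) : 0 < trace (X * ρ) := by
  obtain ⟨r, hr, hrH, rfl⟩ := hρ.exists_isUnit_mul_self_eq
  have hrXr : (r * X * r).PosSemidef := by
    simpa [hrH.eq] using hX.mul_mul_conjTranspose_same r
  have hrXr0 : r * X * r ≠ 0 := fun h =>
    hX0 (hr.mul_left_cancel (hr.mul_right_cancel (by simpa using h)))
  rw [← Matrix.mul_assoc, trace_mul_cycle]
  exact hrXr.trace_nonneg.lt_of_ne (Ne.symm (hrXr.trace_eq_zero_iff.not.2 hrXr0))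

lemma bform_posSemidef {ρ σ : Matrix k k ℂ} (hρ : ρ.IsHermitian) (hσ : σ.PosSemidef) :
    (bform ρ σ).PosSemidef := by
  have hsH : (msqrt σ)ᴴ = msqrt σ := by
    rw [msqrt_eq_sqrt hσ]
    exact (CFC.sqrt_nonneg σ).posSemidef.isHermitian
  have hM : (msqrt σ * ρ * msqrt σ).IsHermitian := by
    simpa [hsH] using isHermitian_conjTranspose_mul_mul (msqrt σ) hρ
  have hN : (invSqrtOnSupp (msqrt σ * ρ * msqrt σ)).PosSemidef := by
    rw [invSqrtOnSupp_eq_cfc hM, ← nonneg_iff_posSemidef]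
    exact cfc_nonneg fun t _ => inv_nonneg.2 (Real.sqrt_nonneg t)
  simpa [bform, hsH] using hN.mul_mul_conjTranspose_same (msqrt σ)

lemma bform_mul_mul_bform {ρ σ : Matrix k k ℂ} (hρ : ρ.PosDef) (hσ : σ.PosSemidef) :
    bform ρ σ * ρ * bform ρ σ = σ := by
  set s := msqrt σ with hs_def
  have hs : 0 ≤ s := by rw [hs_def, msqrt_eq_sqrt hσ]; exact CFC.sqrt_nonneg σ
  have hss : s * s = σ := by rw [hs_def, msqrt_eq_sqrt hσ, CFC.sqrt_mul_sqrt_self σ hσ.nonneg]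
  have hsH : sᴴ = s := hs.posSemidef.isHermitian
  set M := s * ρ * s
  have hM : 0 ≤ M := by simpa [hsH] using (hρ.posSemidef.mul_mul_conjTranspose_same s).nonneg
  set N := invSqrtOnSupp M with hN
  -- `N * M * N` is the support projection of `M = s ρ s`; it fixes `s` as `ρ` is invertible.
  have hMN : M * (N * M * N) = M := by
    have hc (g : ℝ → ℝ) : ContinuousOn g (spectrum ℝ M) := M.finite_real_spectrum.continuousOn g
    have h : cfc (fun t : ℝ => t * ((√t)⁻¹ * t * (√t)⁻¹)) M = M * (N * M * N) := by
      rw [cfc_mul (hf := hc _) (hg := hc _), cfc_mul (hf := hc _) (hg := hc _),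
        cfc_mul (hf := hc _) (hg := hc _), cfc_id' ℝ M, hN,
        invSqrtOnSupp_eq_cfc hM.posSemidef.isHermitian]
    rw [← h]
    nth_rewrite 2 [← cfc_id' ℝ M]
    refine cfc_congr fun t ht => ?_
    have ht0 : 0 ≤ t := spectrum_nonneg_of_nonneg hM ht
    rcases ht0.eq_or_lt with rfl | htpos
    · simp
    · have hsqrt : √t ≠ 0 := (Real.sqrt_pos.2 htpos).ne'
      field_simp
      rw [Real.sq_sqrt ht0]
  have hsP : s * (N * M * N) = s := by
    have h0 : (s * (1 - N * M * N))ᴴ * ρ * (s * (1 - N * M * N)) = 0 := by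
      rw [conjTranspose_mul, hsH]
      calc (1 - N * M * N)ᴴ * s * ρ * (s * (1 - N * M * N))
          = (1 - N * M * N)ᴴ * (M * (1 - N * M * N)) := by simp only [M, Matrix.mul_assoc]
        _ = 0 := by rw [Matrix.mul_sub, Matrix.mul_one, hMN, sub_self, Matrix.mul_zero]
    have := hρ.eq_zero_of_conjTranspose_mul_mul_eq_zero h0
    rwa [Matrix.mul_sub, Matrix.mul_one, sub_eq_zero, eq_comm] at this
  calc bform ρ σ * ρ * bform ρ σ = s * (N * M * N) * s := by
        simp only [bform, M, N, s, Matrix.mul_assoc]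
    _ = σ := by rw [hsP, hss]

lemma PosDef.exists_bform_mul_self_eq_iff {ρ e : Matrix k k ℂ} (hρ : ρ.PosDef) :
    (∃ σ : Matrix k k ℂ, σ.PosSemidef ∧ trace σ = 1 ∧ e = bform ρ σ * bform ρ σ) ↔
      e.PosSemidef ∧ trace (ρ * e) = 1 := by
  constructor
  · rintro ⟨σ, hσ, hσtr, rfl⟩
    have hb := bform_posSemidef hρ.isHermitian hσ
    refine ⟨by simpa [hb.isHermitian.eq] using posSemidef_conjTranspose_mul_self (bform ρ σ), ?_⟩
    rw [← Matrix.mul_assoc, trace_mul_cycle, bform_mul_mul_bform hρ hσ, hσtr]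
  · rintro ⟨he, htr⟩
    set f := CFC.sqrt e
    have hf : 0 ≤ f := CFC.sqrt_nonneg e
    have hff : f * f = e := CFC.sqrt_mul_sqrt_self e he.nonneg
    have hσ : (f * ρ * f).PosSemidef := by
      simpa [hf.posSemidef.isHermitian.eq] using hρ.posSemidef.mul_mul_conjTranspose_same f
    have hbf : bform ρ (f * ρ * f) = f :=
      hρ.eq_of_mul_mul_self_eq (bform_posSemidef hρ.isHermitian hσ) hf.posSemidef
        (bform_mul_mul_bform hρ hσ)
    refine ⟨f * ρ * f, hσ, ?_, by rw [hbf, hff]⟩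
    rw [trace_mul_cycle, hff, trace_mul_comm, htr]

lemma IsHermitian.cfc_negPart_eq_zero_iff {e : Matrix k k ℂ} (he : e.IsHermitian) :
    cfc (fun x : ℝ => x⁻) e = 0 ↔ e.PosSemidef := by
  rw [← nonneg_iff_posSemidef,
    StarOrderedRing.nonneg_iff_spectrum_nonneg (R := ℝ) e he.isSelfAdjoint,
    ← cfc_zero ℝ e, cfc_eq_cfc_iff_eqOn]
  simp [Set.EqOn]

lemma IsHermitian.posSemidef_of_posSemidef_map {e : Matrix k k ℂ} (he : e.IsHermitian)
    (φ : Matrix k k ℂ →⋆ₐ[ℂ] Matrix l l ℂ) (hφ : Function.Injective φ)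
    (hφe : (φ e).PosSemidef) : e.PosSemidef := by
  have hcont : Continuous φ := LinearMap.continuous_of_finiteDimensional φ.toLinearMap
  rw [← he.cfc_negPart_eq_zero_iff]
  refine hφ ?_
  rw [map_zero, φ.map_cfc _ e (e.finite_real_spectrum.continuousOn _) hcont he.isSelfAdjoint
    hφe.isHermitian.isSelfAdjoint, hφe.isHermitian.cfc_negPart_eq_zero_iff]
  exact hφe

lemma posSemidef_and_exists_map_eq_sub_one_iff (φ : Matrix l l ℂ →⋆ₐ[ℂ] Matrix k k ℂ)
    (hφ : Function.Injective φ) {ρ : Matrix l l ℂ} (hρ : ρ.IsHermitian) (htr : trace ρ = 1)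
    (d : Matrix k k ℂ) :
    (d.PosSemidef ∧ ∃ c, trace (ρᴴ * c) = 0 ∧ φ c = d - 1) ↔
      ∃ e, (e.PosSemidef ∧ trace (ρ * e) = 1) ∧ φ e = d := by
  rw [hρ.eq]
  constructor
  · rintro ⟨hd, c, hc, hφc⟩
    have hφe : φ (c + 1) = d := by rw [map_add, map_one, hφc, sub_add_cancel]
    have he : (c + 1).IsHermitian :=
      hφ (by rw [← star_eq_conjTranspose, map_star, hφe, star_eq_conjTranspose, hd.isHermitian.eq])
    refine ⟨c + 1, ⟨he.posSemidef_of_posSemidef_map φ hφ (hφe ▸ hd), ?_⟩, hφe⟩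
    rw [Matrix.mul_add, trace_add, hc, Matrix.mul_one, htr, zero_add]
  · rintro ⟨e, ⟨he, htre⟩, rfl⟩
    refine ⟨(map_nonneg φ he.nonneg).posSemidef, e - 1, ?_, by rw [map_sub, map_one]⟩
    rw [Matrix.mul_sub, trace_sub, htre, Matrix.mul_one, htr, sub_self]

lemma map_conjTranspose_of_adjoint (S : Matrix k k ℂ →ₗ[ℂ] Matrix l l ℂ)
    (φ : Matrix l l ℂ →⋆ₐ[ℂ] Matrix k k ℂ) (hadj : ∀ a b, trace ((φ b)ᴴ * a) = trace (bᴴ * S a))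
    (a : Matrix k k ℂ) : S aᴴ = (S a)ᴴ := by
  refine ext_iff_trace_mul_left.2 fun x => ?_
  have hφ : (φ xᴴ)ᴴ = φ x := by
    rw [← star_eq_conjTranspose, ← map_star, star_eq_conjTranspose, conjTranspose_conjTranspose]
  calc trace (x * S aᴴ) = trace (φ x * aᴴ) := by rw [← hφ, hadj, conjTranspose_conjTranspose]
    _ = star (trace ((φ x)ᴴ * a)) := by
        rw [← trace_conjTranspose, conjTranspose_mul, conjTranspose_conjTranspose, trace_mul_comm]
    _ = trace (x * (S a)ᴴ) := by
        rw [hadj, ← trace_conjTranspose, conjTranspose_mul, conjTranspose_conjTranspose,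
          trace_mul_comm]

lemma PosDef.map_of_adjoint (S : Matrix k k ℂ →ₗ[ℂ] Matrix l l ℂ)
    (φ : Matrix l l ℂ →⋆ₐ[ℂ] Matrix k k ℂ) (hφ : Function.Injective φ)
    (hadj : ∀ a b, trace ((φ b)ᴴ * a) = trace (bᴴ * S a)) {ρ : Matrix k k ℂ} (hρ : ρ.PosDef) :
    (S ρ).PosDef := by
  refine PosDef.of_dotProduct_mulVec_pos ?_ fun v hv => ?_
  · rw [IsHermitian, ← map_conjTranspose_of_adjoint S φ hadj, hρ.isHermitian.eq]
  · have hK := posSemidef_vecMulVec_self_star v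
    have hφK : (φ (vecMulVec v (star v))).PosSemidef := (map_nonneg φ hK.nonneg).posSemidef
    have hφK0 : φ (vecMulVec v (star v)) ≠ 0 :=
      (map_ne_zero_iff φ hφ).2 (vecMulVec_ne_zero hv (star_ne_zero.2 hv))
    calc 0 < trace (φ (vecMulVec v (star v)) * ρ) := hρ.trace_mul_pos hφK hφK0
      _ = star v ⬝ᵥ (S ρ *ᵥ v) := by
        rw [← hφK.isHermitian.eq, hadj, hK.isHermitian.eq, trace_mul_comm, mul_vecMulVec,
          trace_vecMulVec, dotProduct_comm]

end Matrix

theorem simple_generalizedChannel_characterization_general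
    (S : Matrix n n ℂ →ₗ[ℂ] Matrix m m ℂ) (T : Matrix m m ℂ →ₗ[ℂ] Matrix n n ℂ)
    (hStp : ∀ a, Matrix.trace (S a) = Matrix.trace a)
    (hadj : ∀ (a : Matrix n n ℂ) (b : Matrix m m ℂ),
      Matrix.trace ((T b)ᴴ * a) = Matrix.trace (bᴴ * S a))
    (hTinj : Function.Injective T)
    (hTmul : ∀ x y : Matrix m m ℂ, T (x * y) = T x * T y)
    (hTstar : ∀ x : Matrix m m ℂ, T xᴴ = (T x)ᴴ)
    (hTone : T 1 = 1)
    (ρ : Matrix n n ℂ) (hρ : ρ.PosDef) (hρtr : Matrix.trace ρ = 1)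
    (ρ₀ : Matrix m m ℂ) (hρ₀ : ρ₀ = S ρ)
    (d : Matrix n n ℂ) :
    (d.PosSemidef ∧
        ∀ a : Matrix n n ℂ, (∃ t : ℂ, S a = t • ρ₀) → Matrix.trace (aᴴ * (d - 1)) = 0) ↔
      ∃ σ₀ : Matrix m m ℂ, σ₀.PosSemidef ∧ Matrix.trace σ₀ = 1 ∧
        d = T (bform ρ₀ σ₀ * bform ρ₀ σ₀) := by
  let φ : Matrix m m ℂ →⋆ₐ[ℂ] Matrix n n ℂ :=
    { AlgHom.ofLinearMap T hTone hTmul with map_star' := hTstar }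
  have hρ₀pos : ρ₀.PosDef := hρ₀ ▸ hρ.map_of_adjoint S φ hTinj hadj
  have htr : trace ρ₀ = 1 := by rw [hρ₀, hStp, hρtr]
  have hJ : (∀ a, (∃ t : ℂ, S a = t • ρ₀) → trace (aᴴ * (d - 1)) = 0) ↔
      d - 1 ∈ hsPerp ((ℂ ∙ ρ₀).comap S) := by
    simp [hsPerp, Submodule.mem_span_singleton, eq_comm]
  rw [hJ, mem_hsPerp_comap_span_singleton_iff S T hadj]
  refine (posSemidef_and_exists_map_eq_sub_one_iff φ hTinj hρ₀pos.isHermitian htr d).trans ?_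
  simp_rw [← hρ₀pos.exists_bform_mul_self_eq_iff]
  constructor
  · rintro ⟨e, ⟨σ₀, hσ₀, hσ₀tr, rfl⟩, rfl⟩
    exact ⟨σ₀, hσ₀, hσ₀tr, rfl⟩
  · rintro ⟨σ₀, hσ₀, hσ₀tr, rfl⟩
    exact ⟨_, ⟨σ₀, hσ₀, hσ₀tr, rfl⟩, rfl⟩

/-- for `J = S⁻¹(ℂ ρ₀)` with `S` a channel whose Hilbert–Schmidt adjoint
`T = S*` is an injective unital *-homomorphism and `ρ₀ = S ρ` for an invertible state `ρ`,
a positive `d` lies in `(I + J^⊥) ∩ A^+` iff `d = S*(b₀²)` with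
`b₀ = σ₀^{1/2}(σ₀^{1/2} ρ₀ σ₀^{1/2})^{-1/2} σ₀^{1/2}` for some state `σ₀`. -/
theorem simple_generalizedChannel_characterization
    (S : Matrix n n ℂ →ₗ[ℂ] Matrix m m ℂ) (T : Matrix m m ℂ →ₗ[ℂ] Matrix n n ℂ)
    (hSCP : (choi S).PosSemidef) (hStp : ∀ a, Matrix.trace (S a) = Matrix.trace a)
    (hadj : ∀ (a : Matrix n n ℂ) (b : Matrix m m ℂ),
      Matrix.trace ((T b)ᴴ * a) = Matrix.trace (bᴴ * S a))
    (hTinj : Function.Injective T)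
    (hTmul : ∀ x y : Matrix m m ℂ, T (x * y) = T x * T y)
    (hTstar : ∀ x : Matrix m m ℂ, T xᴴ = (T x)ᴴ)
    (hTone : T 1 = 1)
    (ρ : Matrix n n ℂ) (hρ : ρ.PosDef) (hρtr : Matrix.trace ρ = 1)
    (ρ₀ : Matrix m m ℂ) (hρ₀ : ρ₀ = S ρ)
    (d : Matrix n n ℂ) :
    (d.PosSemidef ∧
        ∀ a : Matrix n n ℂ, (∃ t : ℂ, S a = t • ρ₀) → Matrix.trace (aᴴ * (d - 1)) = 0) ↔
      ∃ σ₀ : Matrix m m ℂ, σ₀.PosSemidef ∧ Matrix.trace σ₀ = 1 ∧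
        d = T (bform ρ₀ σ₀ * bform ρ₀ σ₀) :=
  simple_generalizedChannel_characterization_general S T hStp hadj hTinj hTmul hTstar hTone ρ hρ
    hρtr ρ₀ hρ₀ d
end

section
/- For any completely positive map Φ with conjugate map Φ^C (defined via a minimal Kraus representation), Tr Φ(a) = Tr Φ^C(a) for all a ∈ A; consequently, Φ is a generalized channel with respect to J if and only if Φ^C is. -/
open Matrix ComplexOrder

variable {n m : Type*} [Fintype n] [DecidableEq n] [Fintype m] [DecidableEq m]

/-- The conjugate map `Φ^C(a)_{kl} = Tr(V_k a V_l*)` associated to a Kraus family. -/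
noncomputable def conjMap {N : ℕ} (V : Fin N → Matrix m n ℂ) :
    Matrix n n ℂ →ₗ[ℂ] Matrix (Fin N) (Fin N) ℂ where
  toFun a := Matrix.of fun k l => Matrix.trace (V k * a * (V l)ᴴ)
  map_add' a b := by
    ext k l
    simp [Matrix.mul_add, Matrix.add_mul]
  map_smul' c a := by
    ext k l
    simp [Matrix.mul_smul, Matrix.smul_mul]

theorem trace_conjMap {ι κ : Type*} [Fintype ι] [Fintype κ] {N : ℕ}
    (V : Fin N → Matrix κ ι ℂ) (a : Matrix ι ι ℂ) :
    (conjMap V a).trace = (∑ k, V k * a * (V k)ᴴ).trace := by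
  rw [trace_sum]
  rfl

theorem trace_conjMap_eq_and_generalizedChannel_iff_general
    (J : Submodule ℂ (Matrix n n ℂ))
    {N : ℕ} (V : Fin N → Matrix m n ℂ)
    (Φ : Matrix n n ℂ →ₗ[ℂ] Matrix m m ℂ)
    (hΦ : ∀ a : Matrix n n ℂ, Φ a = ∑ k, V k * a * (V k)ᴴ) :
    (∀ a : Matrix n n ℂ, Matrix.trace (Φ a) = Matrix.trace (conjMap V a)) ∧
      ((∀ a ∈ J, Matrix.trace (Φ a) = Matrix.trace a) ↔
        ∀ a ∈ J, Matrix.trace (conjMap V a) = Matrix.trace a) := by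
  have trace_eq (a : Matrix n n ℂ) : (Φ a).trace = (conjMap V a).trace := by
    rw [hΦ, trace_conjMap]
  exact ⟨trace_eq, forall₂_congr fun a _ => by rw [trace_eq]⟩

/-- for a completely positive map `Φ` with minimal Kraus representation
`Φ(a) = Σ_k V_k a V_k*`, one has `Tr Φ(a) = Tr Φ^C(a)` for all `a`; consequently `Φ`
is a generalized channel w.r.t. `J` iff `Φ^C` is. -/
theorem trace_conjMap_eq_and_generalizedChannel_iff
    (J : Submodule ℂ (Matrix n n ℂ))
    {N : ℕ} (V : Fin N → Matrix m n ℂ) (hV : LinearIndependent ℂ V)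
    (Φ : Matrix n n ℂ →ₗ[ℂ] Matrix m m ℂ)
    (hΦ : ∀ a : Matrix n n ℂ, Φ a = ∑ k, V k * a * (V k)ᴴ) :
    (∀ a : Matrix n n ℂ, Matrix.trace (Φ a) = Matrix.trace (conjMap V a)) ∧
      ((∀ a ∈ J, Matrix.trace (Φ a) = Matrix.trace a) ↔
        ∀ a ∈ J, Matrix.trace (conjMap V a) = Matrix.trace a) :=
  trace_conjMap_eq_and_generalizedChannel_iff_general J V Φ hΦ
end

section
/- Let J ⊆ A be a subspace of a finite-dimensional C*-algebra A and B another finite-dimensional C*-algebra. Then the preimage of J under the partial trace Tr_B : B⊗A → A equals (I_B ⊗ J) ⊕ (T(B) ⊗ A), where T(B) is the subspace of traceless elements of B, and the direct sum is orthogonal with respect to the Hilbert–Schmidt inner product. -/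
open Matrix ComplexOrder

variable {n m : Type*} [Fintype n] [DecidableEq n] [Fintype m] [DecidableEq m]

/-- The partial trace over the first factor as a linear map. -/
noncomputable def ptraceL : Matrix (m × n) (m × n) ℂ →ₗ[ℂ] Matrix n n ℂ where
  toFun X := Matrix.of fun a b => ∑ i, X (i, a) (i, b)
  map_add' X Y := by
    ext a b
    simp [Finset.sum_add_distrib]
  map_smul' c X := by
    ext a b
    simp [Finset.mul_sum]

/-! The map `X ↦ X - |ι|⁻¹ • (1 ⊗ Tr_B X)` sends a Kronecker product `t ⊗ a` to
`(t - |ι|⁻¹ tr t • 1) ⊗ a`, whose first factor is traceless; since Kronecker products span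
all of `B ⊗ A`, every `X` splits as `|ι|⁻¹ • (1 ⊗ Tr_B X)` plus an element of `T(B) ⊗ A`, and
the first summand lies in `1 ⊗ J` when `Tr_B X ∈ J`. Orthogonality reduces to
`Tr ((1 ⊗ a)ᴴ (t ⊗ b)) = Tr t · Tr (aᴴ b) = 0`. -/

open Kronecker

theorem span_kronecker_eq_top {R ι κ : Type*} [CommSemiring R] [Fintype ι] [DecidableEq ι]
    [Fintype κ] [DecidableEq κ] :
    Submodule.span R {X : Matrix (ι × κ) (ι × κ) R | ∃ t a, X = t ⊗ₖ a} = ⊤ := by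
  refine Submodule.eq_top_iff'.mpr fun X => ?_
  rw [matrix_eq_sum_single X]
  refine Submodule.sum_mem _ fun p _ => Submodule.sum_mem _ fun q _ => ?_
  have hsingle :
      single p q (X p q) = X p q • (single p.1 q.1 1 ⊗ₖ single p.2 q.2 (1 : R)) := by
    rw [single_kronecker_single, mul_one, smul_single, smul_eq_mul, mul_one]
  rw [hsingle]
  exact Submodule.smul_mem _ _ (Submodule.subset_span ⟨_, _, rfl⟩)

section

variable {ι κ : Type*} [Fintype ι]

variable (ι κ) in
def tracelessKronecker : Submodule ℂ (Matrix (ι × κ) (ι × κ) ℂ) :=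
  Submodule.span ℂ
    {X | ∃ t : Matrix ι ι ℂ, trace t = 0 ∧ ∃ a : Matrix κ κ ℂ, X = t ⊗ₖ a}

variable (ι) in
def oneKronecker [DecidableEq ι] (J : Submodule ℂ (Matrix κ κ ℂ)) :
    Submodule ℂ (Matrix (ι × κ) (ι × κ) ℂ) :=
  Submodule.span ℂ {X | ∃ a ∈ J, X = (1 : Matrix ι ι ℂ) ⊗ₖ a}

theorem ptraceL_kronecker (t : Matrix ι ι ℂ) (a : Matrix κ κ ℂ) :
    ptraceL (t ⊗ₖ a) = trace t • a := by
  ext x y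
  simp [ptraceL, trace, Finset.sum_mul]

theorem tracelessKronecker_le_ker_ptraceL :
    tracelessKronecker ι κ ≤ LinearMap.ker ptraceL := by
  rw [tracelessKronecker, Submodule.span_le]
  rintro _ ⟨t, ht, a, rfl⟩
  simp [ptraceL_kronecker, ht]

theorem oneKronecker_le_comap_ptraceL [DecidableEq ι] (J : Submodule ℂ (Matrix κ κ ℂ)) :
    oneKronecker ι J ≤ J.comap ptraceL := by
  rw [oneKronecker, Submodule.span_le]
  rintro _ ⟨a, ha, rfl⟩
  simpa [ptraceL_kronecker] using J.smul_mem _ ha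

theorem sub_inv_card_smul_one_kronecker_ptraceL_mem_tracelessKronecker [DecidableEq ι]
    [Fintype κ] [DecidableEq κ] (X : Matrix (ι × κ) (ι × κ) ℂ) :
    X - (Fintype.card ι : ℂ)⁻¹ • ((1 : Matrix ι ι ℂ) ⊗ₖ ptraceL X) ∈
      tracelessKronecker ι κ := by
  set c : ℂ := (Fintype.card ι : ℂ)⁻¹
  let f : Matrix (ι × κ) (ι × κ) ℂ →ₗ[ℂ] Matrix (ι × κ) (ι × κ) ℂ :=
    LinearMap.id - c • kroneckerBilinear (R := ℂ) (1 : Matrix ι ι ℂ) ∘ₗ ptraceL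
  suffices LinearMap.range f ≤ tracelessKronecker ι κ from this ⟨X, rfl⟩
  rw [LinearMap.range_eq_map, ← span_kronecker_eq_top, Submodule.map_span_le]
  rintro _ ⟨t, a, rfl⟩
  have hf : f (t ⊗ₖ a) = (t - (c * trace t) • 1) ⊗ₖ a := by
    ext ⟨i, x⟩ ⟨j, y⟩
    simp [f, kroneckerBilinear, ptraceL_kronecker, sub_mul, mul_assoc]
  refine hf ▸ Submodule.subset_span ⟨_, ?_, a, rfl⟩
  rw [trace_sub, trace_smul, trace_one, smul_eq_mul, mul_assoc]
  rcases isEmpty_or_nonempty ι with hι | hι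
  · simp [trace]
  · have hc : c * Fintype.card ι = 1 :=
      inv_mul_cancel₀ (Nat.cast_ne_zero.mpr Fintype.card_ne_zero)
    rw [mul_left_comm, hc, mul_one, sub_self]

theorem comap_ptraceL_eq_sup [DecidableEq ι] [Fintype κ] [DecidableEq κ]
    (J : Submodule ℂ (Matrix κ κ ℂ)) :
    J.comap ptraceL = oneKronecker ι J ⊔ tracelessKronecker ι κ := by
  refine le_antisymm (fun X hX => ?_) (sup_le (oneKronecker_le_comap_ptraceL J) ?_)
  · let P := (Fintype.card ι : ℂ)⁻¹ • ((1 : Matrix ι ι ℂ) ⊗ₖ ptraceL X)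
    have hP : P ∈ oneKronecker ι J := Submodule.smul_mem _ _ (Submodule.subset_span ⟨_, hX, rfl⟩)
    rw [← add_sub_cancel P X]
    exact Submodule.add_mem_sup hP
      (sub_inv_card_smul_one_kronecker_ptraceL_mem_tracelessKronecker X)
  · exact tracelessKronecker_le_ker_ptraceL.trans (Submodule.comap_mono bot_le)

theorem trace_conjTranspose_mul_eq_zero_of_mem_oneKronecker [DecidableEq ι] [Fintype κ]
    (J : Submodule ℂ (Matrix κ κ ℂ)) {X Y : Matrix (ι × κ) (ι × κ) ℂ} (hX : X ∈ oneKronecker ι J)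
    (hY : Y ∈ tracelessKronecker ι κ) : trace (Xᴴ * Y) = 0 := by
  have h_one_kronecker : ∀ a : Matrix κ κ ℂ, tracelessKronecker ι κ ≤ LinearMap.ker
      (traceLinearMap (ι × κ) ℂ ℂ ∘ₗ LinearMap.mulLeft ℂ ((1 : Matrix ι ι ℂ) ⊗ₖ a)ᴴ) := by
    intro a
    rw [tracelessKronecker, Submodule.span_le]
    rintro _ ⟨t, ht, b, rfl⟩
    simp [conjTranspose_kronecker, ← mul_kronecker_mul, trace_kronecker, ht]
  induction hX using Submodule.span_induction with
  | mem X hX =>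
    obtain ⟨a, -, rfl⟩ := hX
    exact h_one_kronecker a hY
  | zero => simp
  | add X Z _ _ hX hZ => simp [add_mul, hX, hZ]
  | smul c X _ hX => simp [hX]

end

open Kronecker in
/-- the preimage of a subspace `J ⊆ A` under the partial trace
`Tr_B : B⊗A → A` equals `(I_B ⊗ J) ⊕ (T(B) ⊗ A)`, an orthogonal direct sum with
respect to the Hilbert–Schmidt inner product. -/
theorem ptrace_preimage_eq_orthogonal_sum
    (J : Submodule ℂ (Matrix n n ℂ)) :
    Submodule.comap (ptraceL (m := m) (n := n)) J =
        Submodule.span ℂ {X : Matrix (m × n) (m × n) ℂ |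
            ∃ a ∈ J, X = (1 : Matrix m m ℂ) ⊗ₖ a} ⊔
        Submodule.span ℂ {X : Matrix (m × n) (m × n) ℂ |
            ∃ t : Matrix m m ℂ, Matrix.trace t = 0 ∧ ∃ a : Matrix n n ℂ, X = t ⊗ₖ a} ∧
      ∀ X ∈ Submodule.span ℂ {X : Matrix (m × n) (m × n) ℂ |
            ∃ a ∈ J, X = (1 : Matrix m m ℂ) ⊗ₖ a},
        ∀ Y ∈ Submodule.span ℂ {X : Matrix (m × n) (m × n) ℂ |
            ∃ t : Matrix m m ℂ, Matrix.trace t = 0 ∧ ∃ a : Matrix n n ℂ, X = t ⊗ₖ a},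
          Matrix.trace (Xᴴ * Y) = 0 := by
  exact ⟨comap_ptraceL_eq_sup J, fun _ hX _ hY =>
    trace_conjTranspose_mul_eq_zero_of_mem_oneKronecker J hX hY⟩
end
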